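/- arXiv:2403.02813 — 2 statements merged into one kernel-verified Lean document; each statement's English description precedes it below -/
import Mathlib

section
/- For every N ≥ 2, the map F_{SU(N)} is injective on the interior of its parameter box: if two parameter tuples lie in the open box int(B_N) (all parameters strictly between the endpoints of their respective intervals) and F_{SU(N)} takes the same value at both tuples, then the tuples are equal. -/
/-!
Euler angles for `SU(N)` (following K. Zwart, after Müger–Tuset).

We define the generalized Gell-Mann type matrices `λ_j` that occur in the Euler
parametrization of `SU(N)`, the Euler map `F_{SU(N)}`, and the parameter box `B_N`,
and state that `F_{SU(N)}` is surjective onto `SU(N)`.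

All matrices are realized in a fixed ambient size `N`; since the matrices `λ_j`
used at recursion level `n ≤ N` are supported in the top-left `n × n` block,
the recursive factor `diag(F_{SU(n-1)}, 1)` is literally the value of the
recursion at the lower level in ambient size `N`.
-/

open Matrix Real

noncomputable section

/-- `λ₀`: the matrix with `i` in the `(1,1)` entry (1-based) and zeros elsewhere. -/
def lam0 (N : ℕ) : Matrix (Fin N) (Fin N) ℂ :=
  Matrix.of fun μ ν => if μ.val = 0 ∧ ν.val = 0 then Complex.I else 0

/-- `λ_{(j+1)²-1} = diag(i,…,i,−i·j,0,…,0)` with the first `j` diagonal entries equal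
to `i` and the `(j+1)`-st equal to `−i·j`.  In particular `λ₃ = lamDiag N 1`. -/
def lamDiag (N j : ℕ) : Matrix (Fin N) (Fin N) ℂ :=
  Matrix.of fun μ ν =>
    if μ = ν then
      (if μ.val < j then Complex.I
        else if μ.val = j then -(j : ℂ) * Complex.I else 0)
    else 0

/-- `λ_{(k-1)²+1}` (for `k ≥ 2`): by the defining formula (the case `j = k-1`, even
index `k' = 2`) this is the real rotation generator `E_{1k} − E_{k1}` (1-based indices). -/
def lamRot (N k : ℕ) : Matrix (Fin N) (Fin N) ℂ :=
  Matrix.of fun μ ν =>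
    (if μ.val = 0 ∧ ν.val = k - 1 then 1 else 0) -
      (if μ.val = k - 1 ∧ ν.val = 0 then 1 else 0)

/-- `A(k)(x,y) = e^{λ₃ x} · e^{λ_{(k-1)²+1} y}`. -/
def Amat (N k : ℕ) (x y : ℝ) : Matrix (Fin N) (Fin N) ℂ :=
  NormedSpace.exp (x • lamDiag N 1) * NormedSpace.exp (y • lamRot N k)

/-- The Euler map `F_{SU(n)}` (realized in ambient dimension `N`), with parameters
`φ ψ ω : ℕ → ℝ` regarded as `1`-indexed lists: at level `n`,
`F_{SU(n)}(φ,ψ,ω) = (∏_{k=2}^{n} A(k)(φ_{k-1}, ψ_{k-1})) ·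
diag(F_{SU(n-1)}(φ_n,…; ψ_n,…; ω_1,…,ω_{n-2}), 1) · e^{λ_{n²-1} ω_{n-1}}`. -/
def FSU (N : ℕ) : ℕ → (ℕ → ℝ) → (ℕ → ℝ) → (ℕ → ℝ) → Matrix (Fin N) (Fin N) ℂ
  | 0, _, _, _ => 1
  | 1, _, _, _ => 1
  | n + 2, φ, ψ, ω =>
      (((List.range (n + 1)).map fun i => Amat N (i + 2) (φ (i + 1)) (ψ (i + 1))).prod) *
        FSU N (n + 1) (fun i => φ (i + (n + 1))) (fun i => ψ (i + (n + 1))) ω *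
        NormedSpace.exp ((ω (n + 1)) • lamDiag N (n + 1))

/-- Membership of `x` in the closed interval `[a,b]` (`s = false`) or the open
interval `(a,b)` (`s = true`). -/
def memI (s : Bool) (a x b : ℝ) : Prop := if s then a < x ∧ x < b else a ≤ x ∧ x ≤ b

/-- The parameter box `B_N` (for `s = false`) resp. its interior (for `s = true`),
defined recursively along the recursion of `FSU`: at level `n`,
`φ_1 ∈ [0,π]`, `φ_2,…,φ_{n-1} ∈ [0,2π]`, `ψ_1,…,ψ_{n-1} ∈ [0,π/2]`,
`ω_{n-1} ∈ [0, 2π/(n-1)]`, and recursively for the shifted parameters. -/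
def InBox (s : Bool) : ℕ → (ℕ → ℝ) → (ℕ → ℝ) → (ℕ → ℝ) → Prop
  | 0, _, _, _ => True
  | 1, _, _, _ => True
  | n + 2, φ, ψ, ω =>
      memI s 0 (φ 1) π ∧
      (∀ i, 2 ≤ i → i ≤ n + 1 → memI s 0 (φ i) (2 * π)) ∧
      (∀ i, 1 ≤ i → i ≤ n + 1 → memI s 0 (ψ i) (π / 2)) ∧
      memI s 0 (ω (n + 1)) (2 * π / (n + 1)) ∧
      InBox s (n + 1) (fun i => φ (i + (n + 1))) (fun i => ψ (i + (n + 1))) ω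

/-!
The last column of `F_{SU(n)}` determines the parameters of the outermost level. The block
`diag(F_{SU(n-1)}, 1)` fixes `e_n`, on which `e^{λ_{n²-1} ω_{n-1}}` acts by the phase
`e^{-i(n-1)ω_{n-1}}`, so this column is that phase times `A(2) ⋯ A(n) e_n`, where
`A(k) = e^{λ₃ φ_{k-1}} e^{λ_{(k-1)²+1} ψ_{k-1}}` rotates the plane `⟨e_1, e_k⟩` by `ψ_{k-1}` and
then multiplies `e_1` by `e^{iφ_{k-1}}` and `e_2` by `e^{-iφ_{k-1}}`. Hence every entry of the
column is a product of sines and cosines of the `ψ`'s, positive on the open box, times a phase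
whose angle ranges over a window shorter than `2π`, and polar coordinates recover
`ψ_{n-1}, φ_{n-1}, …, ψ_1, φ_1` and `ω_{n-1}` entry by entry, from the last one upwards. As `φ_1`
enters both as `e^{iφ_1}` and as `e^{-iφ_1}`, only `2φ_1` is read off modulo `2π`, which is why
its window is `(0, π)`. Cancelling the invertible outer factors leaves `F_{SU(n-1)}` at the
remaining parameters, and induction on `n` finishes the proof.
-/

namespace Matrix

variable {n : Type*} [Fintype n] [DecidableEq n]

/-- `SemiconjBy.exp_right`, for matrices, whose norm is not a global instance. -/
theorem semiconjBy_exp_right {U A B : Matrix n n ℂ} (h : SemiconjBy U A B) :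
    SemiconjBy U (NormedSpace.exp A) (NormedSpace.exp B) :=
  open scoped Norms.Operator in h.exp_right

theorem exp_mulVec_of_mulVec_eq_smul {X : Matrix n n ℂ} {u : n → ℂ} {d : ℂ}
    (h : X *ᵥ u = d • u) : NormedSpace.exp X *ᵥ u = Complex.exp d • u := by
  have hsemi : SemiconjBy (replicateCol n u) (diagonal fun _ => d) X := by
    rw [SemiconjBy, ← replicateCol_mulVec, h]
    ext
    simp [mul_comm]
  have hexp := semiconjBy_exp_right hsemi
  rw [SemiconjBy, exp_diagonal, Pi.exp_def, ← Complex.exp_eq_exp_ℂ] at hexp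
  funext i
  simpa [← replicateCol_mulVec, mul_comm] using (congrFun (congrFun hexp i) i).symm

theorem exp_smul_mulVec_of_mulVec_eq_smul {X : Matrix n n ℂ} {u : n → ℂ} {d : ℂ}
    (h : X *ᵥ u = d • u) (y : ℝ) :
    NormedSpace.exp (y • X) *ᵥ u = Complex.exp (y * d) • u :=
  exp_mulVec_of_mulVec_eq_smul <| by rw [smul_mulVec, h, ← smul_assoc, Complex.real_smul]

theorem exp_smul_mulVec_of_mulVec_eq_zero {X : Matrix n n ℂ} {u : n → ℂ}
    (h : X *ᵥ u = 0) (y : ℝ) : NormedSpace.exp (y • X) *ᵥ u = u := by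
  simpa using exp_smul_mulVec_of_mulVec_eq_smul (d := 0) (by rw [h, zero_smul]) y

theorem exp_smul_mulVec_of_rotation {X : Matrix n n ℂ} {u v : n → ℂ}
    (hu : X *ᵥ u = v) (hv : X *ᵥ v = -u) (y : ℝ) :
    NormedSpace.exp (y • X) *ᵥ u = (cos y : ℂ) • u + (sin y : ℂ) • v := by
  -- `u ∓ i v` are eigenvectors of `X` for the eigenvalues `± i`.
  have hplus : X *ᵥ (u - Complex.I • v) = Complex.I • (u - Complex.I • v) := by
    rw [mulVec_sub, mulVec_smul, hu, hv, smul_sub, smul_smul, Complex.I_mul_I]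
    module
  have hminus : X *ᵥ (u + Complex.I • v) = (-Complex.I) • (u + Complex.I • v) := by
    rw [mulVec_add, mulVec_smul, hu, hv, smul_add, smul_smul, neg_mul, Complex.I_mul_I]
    module
  have hsplit : u = (2⁻¹ : ℂ) • ((u - Complex.I • v) + (u + Complex.I • v)) := by module
  rw [hsplit, mulVec_smul, mulVec_add, exp_smul_mulVec_of_mulVec_eq_smul hplus,
    exp_smul_mulVec_of_mulVec_eq_smul hminus, mul_neg, ← neg_mul, Complex.exp_mul_I,
    Complex.exp_mul_I, ← Complex.ofReal_neg, ← Complex.ofReal_cos, ← Complex.ofReal_sin,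
    ← Complex.ofReal_cos, ← Complex.ofReal_sin, Real.cos_neg, Real.sin_neg]
  ext i
  simp only [Pi.smul_apply, Pi.add_apply, Pi.sub_apply, smul_eq_mul, Complex.ofReal_neg]
  linear_combination (-(sin y * v i)) * Complex.I_sq

end Matrix

section Polar

theorem abs_sub_lt_of_mem_Ioo {x y a : ℝ} (hx : x ∈ Set.Ioo 0 a) (hy : y ∈ Set.Ioo 0 a) :
    |x - y| < a :=
  abs_sub_lt_of_nonneg_of_lt hx.1.le hx.2 hy.1.le hy.2

theorem sin_pos_and_cos_pos_of_mem_Ioo {x : ℝ} (hx : x ∈ Set.Ioo 0 (π / 2)) :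
    0 < sin x ∧ 0 < cos x :=
  ⟨sin_pos_of_pos_of_lt_pi hx.1 (by linarith [hx.2, pi_pos]),
    cos_pos_of_mem_Ioo ⟨by linarith [hx.1, pi_pos], hx.2⟩⟩

theorem eq_of_sin_eq_of_mem_Ioo {x y : ℝ} (hx : x ∈ Set.Ioo 0 (π / 2))
    (hy : y ∈ Set.Ioo 0 (π / 2)) (h : sin x = sin y) : x = y :=
  injOn_sin ⟨by linarith [hx.1, pi_pos], hx.2.le⟩ ⟨by linarith [hy.1, pi_pos], hy.2.le⟩ h

theorem eq_of_cos_eq_of_mem_Ioo {x y : ℝ} (hx : x ∈ Set.Ioo 0 (π / 2))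
    (hy : y ∈ Set.Ioo 0 (π / 2)) (h : cos x = cos y) : x = y :=
  injOn_cos ⟨hx.1.le, by linarith [hx.2, pi_pos]⟩ ⟨hy.1.le, by linarith [hy.2, pi_pos]⟩ h

theorem eq_of_exp_mul_I_eq {θ θ' : ℝ} (hθ : |θ - θ'| < 2 * π)
    (h : Complex.exp (θ * Complex.I) = Complex.exp (θ' * Complex.I)) : θ = θ' := by
  obtain ⟨k, hk⟩ := Complex.exp_eq_exp_iff_exists_int.mp h
  have hdiff : θ - θ' = 2 * π * k := by
    have := congrArg Complex.im hk
    simp only [Complex.add_im, Complex.mul_im, Complex.mul_re, Complex.ofReal_re,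
      Complex.ofReal_im, Complex.I_re, Complex.I_im, Complex.intCast_re, Complex.intCast_im,
      Complex.re_ofNat, Complex.im_ofNat, mul_one, mul_zero, zero_mul, add_zero, sub_zero,
      sub_self] at this
    linarith
  have hk0 : k = 0 := by
    rw [hdiff, abs_mul, abs_of_pos two_pi_pos] at hθ
    have : |(k : ℝ)| < 1 := by nlinarith [pi_pos]
    exact Int.abs_lt_one_iff.mp (by exact_mod_cast this)
  simp only [hk0, Int.cast_zero, mul_zero] at hdiff
  linarith

theorem eq_of_ofReal_mul_exp_eq {r r' θ θ' : ℝ} (hr : 0 < r) (hr' : 0 < r')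
    (hθ : |θ - θ'| < 2 * π)
    (h : r * Complex.exp (θ * Complex.I) = r' * Complex.exp (θ' * Complex.I)) :
    r = r' ∧ θ = θ' := by
  have hrr : r = r' := by
    simpa [Complex.norm_exp_ofReal_mul_I, abs_of_pos hr, abs_of_pos hr'] using congrArg norm h
  subst hrr
  exact ⟨rfl, eq_of_exp_mul_I_eq hθ (mul_left_cancel₀ (by exact_mod_cast hr.ne') h)⟩

theorem eq_of_mul_eq_of_mul_mul_exp_eq {a a' : ℂ} {s c s' c' θ θ' : ℝ} (ha : a ≠ 0)
    (hs : 0 < s) (hc : 0 < c) (hs' : 0 < s') (hc' : 0 < c')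
    (hsc : s ^ 2 + c ^ 2 = 1) (hsc' : s' ^ 2 + c' ^ 2 = 1) (hθ : |θ - θ'| < 2 * π)
    (h₁ : a * s = a' * s')
    (h₂ : a * c * Complex.exp (θ * Complex.I) = a' * c' * Complex.exp (θ' * Complex.I)) :
    a = a' ∧ s = s' ∧ θ = θ' := by
  have ha' : a' ≠ 0 := by
    rintro rfl
    simp [ha, hs.ne'] at h₁
  -- `a / a'` is the positive real `s' / s`, and `s² + c² = s'² + c'²` forces it to be `1`.
  have hrat : a = a' * ((s' / s : ℝ) : ℂ) := by
    have : (s : ℂ) ≠ 0 := by exact_mod_cast hs.ne'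
    push_cast
    field_simp
    linear_combination h₁
  rw [hrat, mul_assoc, mul_assoc, mul_assoc] at h₂
  have hpolar := mul_left_cancel₀ ha' h₂
  rw [← mul_assoc, ← Complex.ofReal_mul] at hpolar
  obtain ⟨hcc, hθθ⟩ := eq_of_ofReal_mul_exp_eq (by positivity) hc' hθ hpolar
  set r := s' / s with hr_def
  have hs'' : s' = r * s := by rw [hr_def]; field_simp
  have hr : r = 1 := by
    have hsq : r ^ 2 = 1 := by
      rw [← hsc', hs'', ← hcc]
      linear_combination (-r ^ 2) * hsc
    have : 0 < r := by positivity
    nlinarith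
  rw [hr, one_mul] at hs''
  exact ⟨by rw [hrat, hr]; simp, hs''.symm, hθθ⟩

theorem eq_of_mul_exp_neg_mul_eq_of_mul_exp_mul_eq {a a' : ℂ} {s c s' c' φ φ' : ℝ}
    (ha : a ≠ 0) (hs : 0 < s) (hc : 0 < c) (hs' : 0 < s') (hc' : 0 < c')
    (hsc : s ^ 2 + c ^ 2 = 1) (hsc' : s' ^ 2 + c' ^ 2 = 1)
    (hφ : φ ∈ Set.Ioo 0 π) (hφ' : φ' ∈ Set.Ioo 0 π)
    (h₁ : a * (Complex.exp (-(φ * Complex.I)) * s) =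
      a' * (Complex.exp (-(φ' * Complex.I)) * s'))
    (h₂ : a * (Complex.exp (φ * Complex.I) * c) = a' * (Complex.exp (φ' * Complex.I) * c')) :
    a = a' ∧ s = s' ∧ φ = φ' := by
  have hshift (x : ℝ) : Complex.exp (-(x * Complex.I)) * Complex.exp (↑(2 * x) * Complex.I) =
      Complex.exp (x * Complex.I) := by
    rw [← Complex.exp_add]
    push_cast
    ring_nf
  have h2φ (x : ℝ) (hx : x ∈ Set.Ioo 0 π) : 2 * x ∈ Set.Ioo 0 (2 * π) :=
    ⟨by linarith [hx.1], by linarith [hx.2]⟩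
  obtain ⟨hb, hss, hφφ⟩ := eq_of_mul_eq_of_mul_mul_exp_eq
    (a := a * Complex.exp (-(φ * Complex.I))) (a' := a' * Complex.exp (-(φ' * Complex.I)))
    (mul_ne_zero ha (Complex.exp_ne_zero _)) hs hc hs' hc' hsc hsc'
    (abs_sub_lt_of_mem_Ioo (h2φ φ hφ) (h2φ φ' hφ'))
    (by linear_combination h₁)
    (by linear_combination h₂ + (a * c) * hshift φ - (a' * c') * hshift φ')
  obtain rfl : φ = φ' := by linarith
  exact ⟨mul_right_cancel₀ (Complex.exp_ne_zero _) hb, hss, rfl⟩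

end Polar

/-- `basisVec N k` is the paper's `e_{k+1}`: indices here start at `0`. -/
def basisVec (N k : ℕ) : Fin N → ℂ := fun μ => if (μ : ℕ) = k then 1 else 0

section Generators

variable {N : ℕ}

theorem mulVec_basisVec (M : Matrix (Fin N) (Fin N) ℂ) {k : ℕ} (hk : k < N) :
    M *ᵥ basisVec N k = fun μ => M μ ⟨k, hk⟩ := by
  have : basisVec N k = Pi.single ⟨k, hk⟩ 1 := by
    ext μ
    simp [basisVec, Pi.single_apply, Fin.ext_iff]
  rw [this, mulVec_single_one]
  rfl

variable {m : ℕ}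

theorem lamRot_mulVec_basisVec_succ (h : m + 1 < N) :
    lamRot N (m + 2) *ᵥ basisVec N (m + 1) = basisVec N 0 := by
  rw [mulVec_basisVec _ h]
  funext μ
  simp [lamRot, basisVec]

theorem lamRot_mulVec_basisVec_zero (h : m + 1 < N) :
    lamRot N (m + 2) *ᵥ basisVec N 0 = -basisVec N (m + 1) := by
  rw [mulVec_basisVec _ (by omega)]
  funext μ
  simp [lamRot, basisVec]

theorem lamRot_mulVec_basisVec_of_ne {j : ℕ} (hj : j < N) (hj0 : j ≠ 0) (hjm : j ≠ m + 1) :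
    lamRot N (m + 2) *ᵥ basisVec N j = 0 := by
  rw [mulVec_basisVec _ hj]
  funext μ
  simp [lamRot, hj0, hjm]

variable {i j : ℕ}

theorem lamDiag_mulVec_basisVec_of_lt (hij : i < j) (hi : i < N) :
    lamDiag N j *ᵥ basisVec N i = Complex.I • basisVec N i := by
  rw [mulVec_basisVec _ hi]
  funext μ
  simp only [lamDiag, basisVec, Fin.ext_iff, of_apply, Pi.smul_apply, smul_eq_mul]
  split_ifs <;> first | omega | ring

theorem lamDiag_mulVec_basisVec_self (hj : j < N) :
    lamDiag N j *ᵥ basisVec N j = (-(j : ℂ) * Complex.I) • basisVec N j := by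
  rw [mulVec_basisVec _ hj]
  funext μ
  simp only [lamDiag, basisVec, Fin.ext_iff, of_apply, Pi.smul_apply, smul_eq_mul]
  split_ifs <;> first | omega | ring

theorem lamDiag_mulVec_basisVec_of_gt (hji : j < i) (hi : i < N) :
    lamDiag N j *ᵥ basisVec N i = 0 := by
  rw [mulVec_basisVec _ hi]
  funext μ
  simp only [lamDiag, Fin.ext_iff, of_apply, Pi.zero_apply]
  split_ifs <;> first | rfl | omega

end Generators

section Columns

variable {N : ℕ}

theorem exp_lamDiag_mulVec_basisVec_of_lt {i j : ℕ} (hij : i < j) (hi : i < N) (x : ℝ) :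
    NormedSpace.exp (x • lamDiag N j) *ᵥ basisVec N i =
      Complex.exp (x * Complex.I) • basisVec N i :=
  exp_smul_mulVec_of_mulVec_eq_smul (lamDiag_mulVec_basisVec_of_lt hij hi) x

theorem exp_lamDiag_mulVec_basisVec_self {j : ℕ} (hj : j < N) (x : ℝ) :
    NormedSpace.exp (x • lamDiag N j) *ᵥ basisVec N j =
      Complex.exp (-(j * x * Complex.I)) • basisVec N j := by
  rw [exp_smul_mulVec_of_mulVec_eq_smul (lamDiag_mulVec_basisVec_self hj) x]
  ring_nf

theorem exp_lamDiag_mulVec_basisVec_of_gt {i j : ℕ} (hji : j < i) (hi : i < N) (x : ℝ) :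
    NormedSpace.exp (x • lamDiag N j) *ᵥ basisVec N i = basisVec N i :=
  exp_smul_mulVec_of_mulVec_eq_zero (lamDiag_mulVec_basisVec_of_gt hji hi) x

def rotPhase (m : ℕ) (x : ℝ) : ℂ := if m = 0 then Complex.exp (-(x * Complex.I)) else 1

variable {m : ℕ}

theorem exp_lamDiag_one_mulVec_basisVec_succ (h : m + 1 < N) (x : ℝ) :
    NormedSpace.exp (x • lamDiag N 1) *ᵥ basisVec N (m + 1) =
      rotPhase m x • basisVec N (m + 1) := by
  rcases m with _ | m
  · simpa [rotPhase] using exp_lamDiag_mulVec_basisVec_self h x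
  · simpa [rotPhase] using exp_lamDiag_mulVec_basisVec_of_gt (by omega) h x

theorem Amat_mulVec_basisVec_zero (h : m + 1 < N) (x y : ℝ) :
    Amat N (m + 2) x y *ᵥ basisVec N 0 =
      (Complex.exp (x * Complex.I) * cos y) • basisVec N 0 +
        (-(rotPhase m x * sin y)) • basisVec N (m + 1) := by
  rw [Amat, ← mulVec_mulVec, exp_smul_mulVec_of_rotation (lamRot_mulVec_basisVec_zero h)
    (by rw [mulVec_neg, lamRot_mulVec_basisVec_succ h]), mulVec_add, mulVec_smul,
    mulVec_smul, mulVec_neg, exp_lamDiag_mulVec_basisVec_of_lt zero_lt_one (by omega),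
    exp_lamDiag_one_mulVec_basisVec_succ h]
  module

theorem Amat_mulVec_basisVec_succ (h : m + 1 < N) (x y : ℝ) :
    Amat N (m + 2) x y *ᵥ basisVec N (m + 1) =
      (Complex.exp (x * Complex.I) * sin y) • basisVec N 0 +
        (rotPhase m x * cos y) • basisVec N (m + 1) := by
  rw [Amat, ← mulVec_mulVec, exp_smul_mulVec_of_rotation (lamRot_mulVec_basisVec_succ h)
    (lamRot_mulVec_basisVec_zero h), mulVec_add, mulVec_smul, mulVec_smul,
    exp_lamDiag_mulVec_basisVec_of_lt zero_lt_one (by omega),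
    exp_lamDiag_one_mulVec_basisVec_succ h]
  module

theorem Amat_mulVec_basisVec_of_lt {j : ℕ} (hmj : m + 1 < j) (hj : j < N) (x y : ℝ) :
    Amat N (m + 2) x y *ᵥ basisVec N j = basisVec N j := by
  rw [Amat, ← mulVec_mulVec, exp_smul_mulVec_of_mulVec_eq_zero
    (lamRot_mulVec_basisVec_of_ne hj (by omega) (by omega)),
    exp_lamDiag_mulVec_basisVec_of_gt (by omega) hj]

def Aprod (N : ℕ) (φ ψ : ℕ → ℝ) (n : ℕ) : Matrix (Fin N) (Fin N) ℂ :=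
  ((List.range n).map fun i => Amat N (i + 2) (φ (i + 1)) (ψ (i + 1))).prod

variable {φ ψ : ℕ → ℝ} {n : ℕ}

theorem Aprod_zero : Aprod N φ ψ 0 = 1 := rfl

theorem Aprod_succ :
    Aprod N φ ψ (n + 1) = Aprod N φ ψ n * Amat N (n + 2) (φ (n + 1)) (ψ (n + 1)) := by
  simp [Aprod, List.range_succ]

theorem isUnit_Aprod : IsUnit (Aprod N φ ψ n) := by
  induction n with
  | zero => exact isUnit_one
  | succ n ih => rw [Aprod_succ]; exact ih.mul ((isUnit_exp _).mul (isUnit_exp _))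

theorem Aprod_congr {φ' ψ' : ℕ → ℝ} (h : ∀ i, 1 ≤ i → i ≤ n → φ i = φ' i ∧ ψ i = ψ' i) :
    Aprod N φ ψ n = Aprod N φ' ψ' n := by
  refine congrArg List.prod (List.map_congr_left fun i hi => ?_)
  obtain ⟨hφ, hψ⟩ := h (i + 1) (by omega) (by simpa using hi)
  rw [hφ, hψ]

theorem Aprod_mulVec_basisVec_of_lt {j : ℕ} (hnj : n < j) (hj : j < N) :
    Aprod N φ ψ n *ᵥ basisVec N j = basisVec N j := by
  induction n with
  | zero => rw [Aprod_zero, one_mulVec]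
  | succ n ih =>
    rw [Aprod_succ, ← mulVec_mulVec, Amat_mulVec_basisVec_of_lt hnj hj, ih (by omega)]

def firstCol (N : ℕ) (φ ψ : ℕ → ℝ) (n : ℕ) : Fin N → ℂ := Aprod N φ ψ n *ᵥ basisVec N 0

theorem firstCol_zero : firstCol N φ ψ 0 = basisVec N 0 := one_mulVec _

theorem firstCol_succ (h : n + 1 < N) :
    firstCol N φ ψ (n + 1) =
      (Complex.exp (φ (n + 1) * Complex.I) * cos (ψ (n + 1))) • firstCol N φ ψ n +
        (-(rotPhase n (φ (n + 1)) * sin (ψ (n + 1)))) • basisVec N (n + 1) := by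
  rw [firstCol, Aprod_succ, ← mulVec_mulVec, Amat_mulVec_basisVec_zero h, mulVec_add,
    mulVec_smul, mulVec_smul, Aprod_mulVec_basisVec_of_lt (by omega) h, firstCol]

theorem firstCol_apply_of_lt {μ : Fin N} (hμ : n < μ) : firstCol N φ ψ n μ = 0 := by
  induction n with
  | zero => simp [firstCol_zero, basisVec, Nat.pos_iff_ne_zero.mp hμ]
  | succ n ih =>
    rw [firstCol_succ (by omega)]
    simp only [Pi.add_apply, Pi.smul_apply, ih (by omega), basisVec,
      if_neg (show (μ : ℕ) ≠ n + 1 by omega), smul_eq_mul, mul_zero, add_zero]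

theorem Aprod_mulVec_basisVec_succ (h : n + 1 < N) :
    Aprod N φ ψ (n + 1) *ᵥ basisVec N (n + 1) =
      (Complex.exp (φ (n + 1) * Complex.I) * sin (ψ (n + 1))) • firstCol N φ ψ n +
        (rotPhase n (φ (n + 1)) * cos (ψ (n + 1))) • basisVec N (n + 1) := by
  rw [Aprod_succ, ← mulVec_mulVec, Amat_mulVec_basisVec_succ h, mulVec_add,
    mulVec_smul, mulVec_smul, Aprod_mulVec_basisVec_of_lt (by omega) h, firstCol]

theorem FSU_succ_succ (ω : ℕ → ℝ) :
    FSU N (n + 2) φ ψ ω = Aprod N φ ψ (n + 1) *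
      FSU N (n + 1) (fun i => φ (i + (n + 1))) (fun i => ψ (i + (n + 1))) ω *
      NormedSpace.exp (ω (n + 1) • lamDiag N (n + 1)) := rfl

theorem FSU_mulVec_basisVec_of_le {j : ℕ} (ω : ℕ → ℝ) (hnj : n ≤ j) (hj : j < N) :
    FSU N n φ ψ ω *ᵥ basisVec N j = basisVec N j := by
  induction n using Nat.twoStepInduction generalizing φ ψ with
  | zero | one => exact one_mulVec _
  | more n _ ih =>
    rw [FSU_succ_succ, ← mulVec_mulVec, ← mulVec_mulVec,
      exp_lamDiag_mulVec_basisVec_of_gt (by omega) hj, ih (by omega),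
      Aprod_mulVec_basisVec_of_lt (by omega) hj]

theorem FSU_mulVec_basisVec_succ (ω : ℕ → ℝ) (h : n + 1 < N) :
    FSU N (n + 2) φ ψ ω *ᵥ basisVec N (n + 1) =
      Complex.exp (-((n + 1 : ℕ) * ω (n + 1) * Complex.I)) •
        (Aprod N φ ψ (n + 1) *ᵥ basisVec N (n + 1)) := by
  rw [FSU_succ_succ, ← mulVec_mulVec, ← mulVec_mulVec, exp_lamDiag_mulVec_basisVec_self h,
    mulVec_smul, mulVec_smul, FSU_mulVec_basisVec_of_le ω le_rfl h]

end Columns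

section Recovery

variable {N : ℕ}

def InteriorAngles (m : ℕ) (φ ψ : ℕ → ℝ) : Prop :=
  φ 1 ∈ Set.Ioo 0 π ∧ (∀ i, 2 ≤ i → i ≤ m → φ i ∈ Set.Ioo 0 (2 * π)) ∧
    ∀ i, 1 ≤ i → i ≤ m → ψ i ∈ Set.Ioo 0 (π / 2)

theorem InteriorAngles.mono {m : ℕ} {φ ψ : ℕ → ℝ} (h : InteriorAngles (m + 1) φ ψ) :
    InteriorAngles m φ ψ :=
  ⟨h.1, fun i hi hi' => h.2.1 i hi (by omega), fun i hi hi' => h.2.2 i hi (by omega)⟩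

theorem eq_of_add_smul_basisVec_eq {k : ℕ} (hk : k < N) {w w' : Fin N → ℂ}
    (hw : w ⟨k, hk⟩ = 0) (hw' : w' ⟨k, hk⟩ = 0) {α β α' β' : ℂ}
    (h : α • w + β • basisVec N k = α' • w' + β' • basisVec N k) :
    β = β' ∧ α • w = α' • w' := by
  have hβ : β = β' := by simpa [hw, hw', basisVec] using congrFun h ⟨k, hk⟩
  subst hβ
  exact ⟨rfl, add_right_cancel h⟩

theorem eq_of_smul_basisVec_eq {k : ℕ} (hk : k < N) {α α' : ℂ}
    (h : α • basisVec N k = α' • basisVec N k) : α = α' := by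
  simpa [basisVec] using congrFun h ⟨k, hk⟩

theorem eq_of_smul_firstCol_eq {φ ψ φ' ψ' : ℕ → ℝ} {m : ℕ} (hm : 1 ≤ m) (hmN : m < N)
    (hA : InteriorAngles m φ ψ) (hA' : InteriorAngles m φ' ψ') {a a' : ℂ} (ha : a ≠ 0)
    (h : a • firstCol N φ ψ m = a' • firstCol N φ' ψ' m) :
    a = a' ∧ ∀ i, 1 ≤ i → i ≤ m → φ i = φ' i ∧ ψ i = ψ' i := by
  induction m, hm using Nat.le_induction generalizing a a' with
  | base =>
    rw [firstCol_succ hmN, firstCol_succ hmN, firstCol_zero, firstCol_zero, smul_add, smul_add,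
      smul_smul, smul_smul, smul_smul, smul_smul] at h
    obtain ⟨h₁, h₀⟩ := eq_of_add_smul_basisVec_eq hmN (by simp [basisVec])
      (by simp [basisVec]) h
    have hψ := hA.2.2 1 le_rfl le_rfl
    have hψ' := hA'.2.2 1 le_rfl le_rfl
    obtain ⟨hs, hc⟩ := sin_pos_and_cos_pos_of_mem_Ioo hψ
    obtain ⟨hs', hc'⟩ := sin_pos_and_cos_pos_of_mem_Ioo hψ'
    obtain ⟨ha_eq, hss, hφ⟩ := eq_of_mul_exp_neg_mul_eq_of_mul_exp_mul_eq (a' := a') ha hs hc hs'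
      hc' (sin_sq_add_cos_sq _) (sin_sq_add_cos_sq _) hA.1 hA'.1
      (by simpa [rotPhase] using h₁) (eq_of_smul_basisVec_eq (by omega) h₀)
    refine ⟨ha_eq, fun i hi hi' => ?_⟩
    obtain rfl : i = 1 := by omega
    exact ⟨hφ, eq_of_sin_eq_of_mem_Ioo hψ hψ' hss⟩
  | succ m hm ih =>
    rw [firstCol_succ hmN, firstCol_succ hmN, smul_add, smul_add, smul_smul,
      smul_smul, smul_smul, smul_smul] at h
    obtain ⟨h₁, h₀⟩ := eq_of_add_smul_basisVec_eq hmN (firstCol_apply_of_lt (by simp))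
      (firstCol_apply_of_lt (by simp)) h
    have hψ := hA.2.2 (m + 1) (by omega) le_rfl
    have hψ' := hA'.2.2 (m + 1) (by omega) le_rfl
    obtain ⟨hs, hc⟩ := sin_pos_and_cos_pos_of_mem_Ioo hψ
    obtain ⟨hs', hc'⟩ := sin_pos_and_cos_pos_of_mem_Ioo hψ'
    obtain ⟨hlow, hφψ⟩ := ih (by omega) hA.mono hA'.mono
      (mul_ne_zero ha (mul_ne_zero (Complex.exp_ne_zero _) (by exact_mod_cast hc.ne'))) h₀
    have hrot (x : ℝ) : rotPhase m x = 1 := if_neg (by omega)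
    obtain ⟨ha_eq, hss, hφ⟩ := eq_of_mul_eq_of_mul_mul_exp_eq (a' := a') ha hs hc hs' hc'
      (sin_sq_add_cos_sq _) (sin_sq_add_cos_sq _)
      (abs_sub_lt_of_mem_Ioo (hA.2.1 _ (by omega) le_rfl) (hA'.2.1 _ (by omega) le_rfl))
      (by simp only [hrot] at h₁; linear_combination -h₁) (by linear_combination hlow)
    refine ⟨ha_eq, fun i hi hi' => ?_⟩
    rcases Nat.lt_or_ge i (m + 1) with hlt | hge
    · exact hφψ i hi (by omega)
    · obtain rfl : i = m + 1 := by omega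
      exact ⟨hφ, eq_of_sin_eq_of_mem_Ioo hψ hψ' hss⟩

end Recovery

section Injectivity

variable {N : ℕ} {φ ψ φ' ψ' : ℕ → ℝ} {n : ℕ}

theorem eq_of_smul_Aprod_mulVec_basisVec_eq (hn : n + 1 < N) (hA : InteriorAngles (n + 1) φ ψ)
    (hA' : InteriorAngles (n + 1) φ' ψ') {b b' : ℂ} (hb : b ≠ 0)
    (h : b • (Aprod N φ ψ (n + 1) *ᵥ basisVec N (n + 1)) =
      b' • (Aprod N φ' ψ' (n + 1) *ᵥ basisVec N (n + 1))) :
    b = b' ∧ ∀ i, 1 ≤ i → i ≤ n + 1 → φ i = φ' i ∧ ψ i = ψ' i := by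
  rw [Aprod_mulVec_basisVec_succ hn, Aprod_mulVec_basisVec_succ hn, smul_add, smul_add,
    smul_smul, smul_smul, smul_smul, smul_smul] at h
  obtain ⟨h₁, h₀⟩ := eq_of_add_smul_basisVec_eq hn (firstCol_apply_of_lt (by simp))
    (firstCol_apply_of_lt (by simp)) h
  have hψ := hA.2.2 (n + 1) (by omega) le_rfl
  have hψ' := hA'.2.2 (n + 1) (by omega) le_rfl
  obtain ⟨hs, hc⟩ := sin_pos_and_cos_pos_of_mem_Ioo hψ
  obtain ⟨hs', hc'⟩ := sin_pos_and_cos_pos_of_mem_Ioo hψ'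
  rcases n with _ | m
  · rw [firstCol_zero, firstCol_zero] at h₀
    obtain ⟨hb_eq, hcos, hφ⟩ := eq_of_mul_exp_neg_mul_eq_of_mul_exp_mul_eq (a' := b') hb hc hs
      hc' hs' (cos_sq_add_sin_sq _) (cos_sq_add_sin_sq _) hA.1 hA'.1
      (by simpa [rotPhase] using h₁) (eq_of_smul_basisVec_eq (by omega) h₀)
    refine ⟨hb_eq, fun i hi hi' => ?_⟩
    obtain rfl : i = 1 := by omega
    exact ⟨hφ, eq_of_cos_eq_of_mem_Ioo hψ hψ' hcos⟩
  · obtain ⟨hlow, hφψ⟩ := eq_of_smul_firstCol_eq (by omega) (by omega) hA.mono hA'.mono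
      (mul_ne_zero hb (mul_ne_zero (Complex.exp_ne_zero _) (by exact_mod_cast hs.ne'))) h₀
    have hrot (x : ℝ) : rotPhase (m + 1) x = 1 := if_neg (by omega)
    obtain ⟨hb_eq, hcos, hφ⟩ := eq_of_mul_eq_of_mul_mul_exp_eq (a' := b') hb hc hs hc' hs'
      (cos_sq_add_sin_sq _) (cos_sq_add_sin_sq _)
      (abs_sub_lt_of_mem_Ioo (hA.2.1 _ (by omega) le_rfl) (hA'.2.1 _ (by omega) le_rfl))
      (by simpa only [hrot, one_mul] using h₁) (by linear_combination hlow)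
    refine ⟨hb_eq, fun i hi hi' => ?_⟩
    rcases Nat.lt_or_ge i (m + 2) with hlt | hge
    · exact hφψ i hi (by omega)
    · obtain rfl : i = m + 2 := by omega
      exact ⟨hφ, eq_of_cos_eq_of_mem_Ioo hψ hψ' hcos⟩

theorem eq_of_exp_neg_mul_I_eq {ω ω' : ℝ} (hω : ω ∈ Set.Ioo 0 (2 * π / (n + 1)))
    (hω' : ω' ∈ Set.Ioo 0 (2 * π / (n + 1)))
    (h : Complex.exp (-((n + 1 : ℕ) * ω * Complex.I)) =
      Complex.exp (-((n + 1 : ℕ) * ω' * Complex.I))) : ω = ω' := by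
  have hn : (0 : ℝ) < n + 1 := by positivity
  rw [Set.mem_Ioo, lt_div_iff₀ hn] at hω hω'
  have hθ : |-((n + 1) * ω) - -((n + 1) * ω')| < 2 * π := by
    rw [neg_sub_neg]
    exact abs_sub_lt_of_nonneg_of_lt (by nlinarith) (by linarith) (by nlinarith) (by linarith)
  have hθθ := eq_of_exp_mul_I_eq hθ (by push_cast at h ⊢; rwa [neg_mul, neg_mul])
  nlinarith

theorem params_eq_of_FSU_eq_succ_succ {ω ω' : ℕ → ℝ} (hn : n + 1 < N)
    (hB : InBox true (n + 2) φ ψ ω) (hB' : InBox true (n + 2) φ' ψ' ω') (heq : FSU N (n + 2) φ ψ ω = FSU N (n + 2) φ' ψ' ω') :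
    (∀ i, 1 ≤ i → i ≤ n + 1 → φ i = φ' i ∧ ψ i = ψ' i) ∧ ω (n + 1) = ω' (n + 1) ∧
      FSU N (n + 1) (fun i => φ (i + (n + 1))) (fun i => ψ (i + (n + 1))) ω =
        FSU N (n + 1) (fun i => φ' (i + (n + 1))) (fun i => ψ' (i + (n + 1))) ω' := by
  obtain ⟨hφ₁, hφ, hψ, hω, -⟩ := hB
  obtain ⟨hφ₁', hφ', hψ', hω', -⟩ := hB'
  have hcol := congrArg (· *ᵥ basisVec N (n + 1)) heq
  simp only [FSU_mulVec_basisVec_succ _ hn] at hcol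
  obtain ⟨hphase, hφψ⟩ := eq_of_smul_Aprod_mulVec_basisVec_eq hn ⟨hφ₁, hφ, hψ⟩
    ⟨hφ₁', hφ', hψ'⟩ (Complex.exp_ne_zero _) hcol
  have hωω := eq_of_exp_neg_mul_I_eq hω hω' hphase
  refine ⟨hφψ, hωω, ?_⟩
  rw [FSU_succ_succ, FSU_succ_succ, Aprod_congr hφψ, hωω] at heq
  exact isUnit_Aprod.mul_left_cancel ((isUnit_exp _).mul_right_cancel heq)

theorem params_eq_of_FSU_eq : ∀ {n : ℕ}, n ≤ N → ∀ {φ ψ ω φ' ψ' ω' : ℕ → ℝ},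
    InBox true n φ ψ ω → InBox true n φ' ψ' ω' → FSU N n φ ψ ω = FSU N n φ' ψ' ω' →
    (∀ i, 1 ≤ i → i ≤ n * (n - 1) / 2 → φ i = φ' i ∧ ψ i = ψ' i) ∧
      ∀ i, 1 ≤ i → i ≤ n - 1 → ω i = ω' i
  | 0, _, _, _, _, _, _, _, _, _, _ => ⟨fun _ _ _ => by omega, fun _ _ _ => by omega⟩
  | 1, _, _, _, _, _, _, _, _, _, _ => ⟨fun _ _ _ => by omega, fun _ _ _ => by omega⟩
  | n + 2, hn, _, _, _, _, _, _, hB, hB', heq => by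
    obtain ⟨hφψ, hω, hlow⟩ := params_eq_of_FSU_eq_succ_succ (by omega) hB hB' heq
    obtain ⟨ihφψ, ihω⟩ := params_eq_of_FSU_eq (by omega) hB.2.2.2.2 hB'.2.2.2.2 hlow
    refine ⟨fun i hi hi' => ?_, fun i hi hi' => ?_⟩
    · rcases Nat.lt_or_ge (n + 1) i with hlt | hge
      · rw [Nat.triangle_succ] at hi'
        simpa [Nat.sub_add_cancel hlt.le] using ihφψ (i - (n + 1)) (by omega) (by omega)
      · exact hφψ i hi hge
    · rcases Nat.lt_or_ge i (n + 1) with hlt | hge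
      · exact ihω i hi (by omega)
      · obtain rfl : i = n + 1 := by omega
        exact hω

end Injectivity

theorem FSU_injective_on_interior_general (N : ℕ)
    (φ ψ ω φ' ψ' ω' : ℕ → ℝ)
    (h : InBox true N φ ψ ω) (h' : InBox true N φ' ψ' ω')
    (heq : FSU N N φ ψ ω = FSU N N φ' ψ' ω') :
    (∀ i, 1 ≤ i → i ≤ N * (N - 1) / 2 → φ i = φ' i ∧ ψ i = ψ' i) ∧
      (∀ i, 1 ≤ i → i ≤ N - 1 → ω i = ω' i) :=
  params_eq_of_FSU_eq le_rfl h h' heq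

/-- **Injectivity of the generalized Euler angles for `SU(N)` on the open box**:
if two parameter tuples lie in the interior of `B_N` and `F_{SU(N)}` takes the same
value at both, then the tuples agree (i.e. all the relevant parameters
`φ_1,…,φ_{N(N-1)/2}`, `ψ_1,…,ψ_{N(N-1)/2}`, `ω_1,…,ω_{N-1}` coincide). -/
theorem FSU_injective_on_interior (N : ℕ) (hN : 2 ≤ N)
    (φ ψ ω φ' ψ' ω' : ℕ → ℝ)
    (h : InBox true N φ ψ ω) (h' : InBox true N φ' ψ' ω')
    (heq : FSU N N φ ψ ω = FSU N N φ' ψ' ω') :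
    (∀ i, 1 ≤ i → i ≤ N * (N - 1) / 2 → φ i = φ' i ∧ ψ i = ψ' i) ∧
      (∀ i, 1 ≤ i → i ≤ N - 1 → ω i = ω' i) :=
  FSU_injective_on_interior_general N φ ψ ω φ' ψ' ω' h h' heq
end
end

section
/- For every N ∈ ℕ, the KAK decomposition of Sp(N) is unique up to the centralizer on the interior of 𝒜: if U, U', V, V' ∈ U(N) and y, y' ∈ ℝ^N satisfy 0 < y_1 < y_2 < ⋯ < y_N < π/2, 0 < y'_1 < y'_2 < ⋯ < y'_N < π/2, and k(U)·exp(H(y))·k(V) = k(U')·exp(H(y'))·k(V'), then y = y' and there exist signs ε_1,…,ε_N ∈ {−1,1} such that U' = U·diag(ε_1,…,ε_N) and V' = diag(ε_1,…,ε_N)·V. -/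
/-!
The compact symplectic group `Sp(N)` realized inside `U(2N)`, with the
`2N × 2N` matrices indexed by `Fin N ⊕ Fin N` (block form).
-/

open Matrix Real

noncomputable section

/-- The standard symplectic form `J = [[0, 1],[−1, 0]]` (block form). -/
def Jmat (N : ℕ) : Matrix (Fin N ⊕ Fin N) (Fin N ⊕ Fin N) ℂ :=
  Matrix.fromBlocks 0 1 (-1) 0

/-- The compact symplectic group `Sp(N) = {A ∈ U(2N) : J A Jᵀ = conj A}`,
as a set of `2N × 2N` complex matrices. -/
def SpSet (N : ℕ) : Set (Matrix (Fin N ⊕ Fin N) (Fin N ⊕ Fin N) ℂ) :=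
  {A | A ∈ Matrix.unitaryGroup (Fin N ⊕ Fin N) ℂ ∧
    Jmat N * A * (Jmat N)ᵀ = A.map (starRingEnd ℂ)}

/-- The embedding `k : U(N) → Sp(N)`, `k(U) = diag(U, conj U)` (block diagonal). -/
def kEmb (N : ℕ) (U : Matrix (Fin N) (Fin N) ℂ) :
    Matrix (Fin N ⊕ Fin N) (Fin N ⊕ Fin N) ℂ :=
  Matrix.fromBlocks U 0 0 (U.map (starRingEnd ℂ))

/-- `H(y) = [[0, D(y)],[−D(y), 0]]` with `D(y) = diag(y_1,…,y_N)`. -/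
def Hmat (N : ℕ) (y : Fin N → ℝ) :
    Matrix (Fin N ⊕ Fin N) (Fin N ⊕ Fin N) ℂ :=
  Matrix.fromBlocks 0 (Matrix.diagonal fun i => (y i : ℂ))
    (-(Matrix.diagonal fun i => (y i : ℂ))) 0

/-!
`exp H(y)` is the block rotation `[[C, S], [-S, C]]` with `C = diag(cos y)`, `S = diag(sin y)`.
Comparing the upper blocks of the two decompositions gives `A C B = C'` and `A S B̄ = S'` for
the unitaries `A = U'^* U`, `B = V V'^*`, hence `A S² A^* = S'²`. The entries `sin² y_i` and
`sin² y'_i` are strictly increasing, and an invertible matrix intertwining two such diagonal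
matrices is diagonal and the entries agree; so `y = y'` and `A` is diagonal. Since `C` and `S`
are invertible, `A C B = C` forces `B = A^*`, and then `A S B̄ = S` forces `A = diag(±1)`.
-/

namespace SpKAK

section DiagBlocks

variable {n : Type*} [DecidableEq n]

def diagBlocks (a b c d : n → ℂ) : Matrix (n ⊕ n) (n ⊕ n) ℂ :=
  fromBlocks (diagonal a) (diagonal b) (diagonal c) (diagonal d)

theorem diagBlocks_mul [Fintype n] (a b c d a' b' c' d' : n → ℂ) :
    diagBlocks a b c d * diagBlocks a' b' c' d' =
      diagBlocks (a * a' + b * c') (a * b' + b * d') (c * a' + d * c') (c * b' + d * d') := by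
  simp [diagBlocks, fromBlocks_multiply, diagonal_mul_diagonal, diagonal_add]

theorem diagBlocks_one : diagBlocks (1 : n → ℂ) 0 0 1 = 1 := by
  simp [diagBlocks, ← diagonal_one]

theorem diagBlocks_zero_zero_eq_diagonal (a d : n → ℂ) :
    diagBlocks a 0 0 d = diagonal (Sum.elim a d) := by
  simp [diagBlocks]

theorem exp_diagBlocks_zero_zero [Fintype n] (a d : n → ℂ) :
    NormedSpace.exp (diagBlocks a 0 0 d) =
      diagBlocks (fun i => Complex.exp (a i)) 0 0 (fun i => Complex.exp (d i)) := by
  rw [diagBlocks_zero_zero_eq_diagonal, diagBlocks_zero_zero_eq_diagonal, exp_diagonal]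
  congr 1
  ext (i | i) <;> simp [Pi.coe_exp, Complex.exp_eq_exp_ℂ]

theorem exp_diagBlocks_rotation [Fintype n] (t : n → ℂ) :
    NormedSpace.exp (diagBlocks 0 t (-t) 0) =
      diagBlocks (fun i => Complex.cos (t i)) (fun i => Complex.sin (t i))
        (fun i => -Complex.sin (t i)) (fun i => Complex.cos (t i)) := by
  -- `P = [[1, 1], [i, -i]]` diagonalizes the generator, with eigenvalues `± i t`.
  set P := diagBlocks (1 : n → ℂ) 1 (fun _ => Complex.I) (fun _ => -Complex.I)
  set Q := diagBlocks (fun _ : n => (1 / 2 : ℂ)) (fun _ => -Complex.I / 2) (fun _ => 1 / 2)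
    (fun _ => Complex.I / 2)
  set D := diagBlocks (fun i => Complex.I * t i) 0 0 (fun i => -(Complex.I * t i))
  have hPQ : P * Q = 1 := by
    rw [diagBlocks_mul, ← diagBlocks_one]
    congr <;> ext <;> simp <;> grind [Complex.I_sq]
  have hdiag : diagBlocks 0 t (-t) 0 = P * D * Q := by
    rw [diagBlocks_mul, diagBlocks_mul]
    congr <;> ext <;> simp <;> grind [Complex.I_sq]
  have hconj : NormedSpace.exp (P * D * Q) = P * NormedSpace.exp D * Q :=
    Matrix.exp_units_conj ⟨P, Q, hPQ, mul_eq_one_comm.mp hPQ⟩ D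
  rw [hdiag, hconj, exp_diagBlocks_zero_zero, diagBlocks_mul, diagBlocks_mul]
  congr <;> ext <;> simp [Complex.cos, Complex.sin] <;> grind [Complex.I_sq]

end DiagBlocks

section Unitary

variable {R : Type*} [Monoid R] [StarMul R]

theorem star_mul_mul_mul_mul_star_eq {u v u' v' x x' : R} (hu' : u' ∈ unitary R)
    (hv' : v' ∈ unitary R) (h : u * x * v = u' * x' * v') :
    star u' * u * x * (v * star v') = x' := by
  calc star u' * u * x * (v * star v') = star u' * (u * x * v) * star v' := by
        simp only [mul_assoc]
    _ = x' := by
        rw [h]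
        simp only [mul_assoc, Unitary.mul_star_self_of_mem hv', mul_one]
        rw [← mul_assoc, Unitary.star_mul_self_of_mem hu', one_mul]

theorem mul_mul_star_self_eq_mul_star_self_mul {a b x x' : R} (ha : a ∈ unitary R)
    (hb : b ∈ unitary R) (h : a * x * b = x') :
    a * (x * star x) = x' * star x' * a := by
  rw [← h]
  simp only [star_mul, mul_assoc, Unitary.star_mul_self_of_mem ha, mul_one]
  rw [← mul_assoc b, Unitary.mul_star_self_of_mem hb, one_mul]

theorem eq_mul_of_star_mul_eq {u u' e : R} (hu' : u' ∈ unitary R) (h : star u' * u = e)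
    (he : e * e = 1) : u' = u * e := by
  calc u' = u' * (star u' * u) * e := by rw [h, mul_assoc, he, mul_one]
    _ = u * e := by rw [← mul_assoc, Unitary.mul_star_self_of_mem hu', one_mul]

theorem eq_mul_of_mul_star_eq {v v' e : R} (hv' : v' ∈ unitary R) (h : v * star v' = e)
    (he : e * e = 1) : v' = e * v := by
  calc v' = e * (v * star v') * v' := by rw [h, he, one_mul]
    _ = e * v := by rw [mul_assoc, mul_assoc, Unitary.star_mul_self_of_mem hv', mul_one]

end Unitary

variable {N : ℕ}

theorem exp_Hmat (y : Fin N → ℝ) :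
    NormedSpace.exp (Hmat N y) =
      diagBlocks (fun i => (cos (y i) : ℂ)) (fun i => (sin (y i) : ℂ))
        (fun i => -(sin (y i) : ℂ)) (fun i => (cos (y i) : ℂ)) := by
  have hH : Hmat N y = diagBlocks 0 (fun i => (y i : ℂ)) (-fun i => (y i : ℂ)) 0 := by
    simp [Hmat, diagBlocks, diagonal_neg]
  simp [hH, exp_diagBlocks_rotation, Complex.ofReal_cos, Complex.ofReal_sin]

theorem kEmb_mul_fromBlocks_mul_kEmb (U V A B C D : Matrix (Fin N) (Fin N) ℂ) :
    kEmb N U * fromBlocks A B C D * kEmb N V =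
      fromBlocks (U * A * V) (U * B * V.map (starRingEnd ℂ)) (U.map (starRingEnd ℂ) * C * V)
        (U.map (starRingEnd ℂ) * D * V.map (starRingEnd ℂ)) := by
  simp [kEmb, fromBlocks_multiply, Matrix.mul_assoc]

theorem upper_blocks_eq_of_kEmb_mul_exp_Hmat_mul_kEmb_eq {U U' V V' : Matrix (Fin N) (Fin N) ℂ}
    {y y' : Fin N → ℝ} (hU' : U' ∈ unitaryGroup (Fin N) ℂ)
    (hV' : V' ∈ unitaryGroup (Fin N) ℂ)
    (heq : kEmb N U * NormedSpace.exp (Hmat N y) * kEmb N V =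
      kEmb N U' * NormedSpace.exp (Hmat N y') * kEmb N V') :
    star U' * U * diagonal (fun i => (cos (y i) : ℂ)) * (V * star V') =
        diagonal (fun i => (cos (y' i) : ℂ)) ∧
      star U' * U * diagonal (fun i => (sin (y i) : ℂ)) * (V * star V').map (starRingEnd ℂ) =
        diagonal (fun i => (sin (y' i) : ℂ)) := by
  rw [exp_Hmat, exp_Hmat, diagBlocks, diagBlocks, kEmb_mul_fromBlocks_mul_kEmb,
    kEmb_mul_fromBlocks_mul_kEmb] at heq
  obtain ⟨hC, hS, -, -⟩ := fromBlocks_inj.mp heq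
  refine ⟨star_mul_mul_mul_mul_star_eq hU' hV' hC, ?_⟩
  rw [Matrix.map_mul, star_eq_conjTranspose V', conjTranspose_map (starRingEnd ℂ) (fun _ => rfl),
    ← star_eq_conjTranspose]
  exact star_mul_mul_mul_mul_star_eq hU' (map_star_mem_unitaryGroup_iff.mpr hV') hS

section Diagonal

variable {n : Type*} [Fintype n] [DecidableEq n]

theorem diagonal_ofReal_mul_star_self (x : n → ℝ) :
    (diagonal fun i => (x i : ℂ)) * star (diagonal fun i => (x i : ℂ)) =
      diagonal fun i => ((x i ^ 2 : ℝ) : ℂ) := by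
  rw [star_eq_conjTranspose, diagonal_conjTranspose, diagonal_mul_diagonal]
  congr 1
  ext i
  simp [sq]

theorem eq_and_isDiag_of_mul_diagonal_eq_diagonal_mul [LinearOrder n] {A : Matrix n n ℂ}
    (hA : IsUnit A) {d d' : n → ℝ} (hd : StrictMono d) (hd' : StrictMono d')
    (h : A * diagonal (fun j => (d j : ℂ)) = diagonal (fun i => (d' i : ℂ)) * A) :
    d = d' ∧ A.IsDiag := by
  have hval : ∀ i j, A i j ≠ 0 → d j = d' i := by
    intro i j hij
    have hij' := congrFun (congrFun h i) j
    rw [mul_diagonal, diagonal_mul, mul_comm] at hij'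
    exact_mod_cast mul_right_cancel₀ hij hij'
  have hrow : ∀ i, ∃ j, A i j ≠ 0 := by
    intro i
    by_contra! hzero
    exact ((isUnit_iff_isUnit_det A).mp hA).ne_zero (det_eq_zero_of_row_eq_zero i hzero)
  choose σ hσ using hrow
  -- `d ∘ σ = d'`, so `σ` is strictly monotone, hence the identity.
  have hσ_mono : StrictMono σ := fun i i' hii' =>
    hd.lt_iff_lt.mp (by rw [hval _ _ (hσ i), hval _ _ (hσ i')]; exact hd' hii')
  have hdd' : d = d' := funext fun i => by simpa [hσ_mono.apply_eq] using hval i (σ i) (hσ i)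
  refine ⟨hdd', fun i j hij => ?_⟩
  by_contra hne
  exact hij (hd.injective (hdd' ▸ hval i j hne)).symm

theorem signs_and_eq_diagonal_of_diagonal_mul_mul_eq {a c s : n → ℂ} {B : Matrix n n ℂ}
    (ha : diagonal a ∈ unitaryGroup n ℂ) (hc : ∀ i, c i ≠ 0) (hs : ∀ i, s i ≠ 0)
    (hC : diagonal a * diagonal c * B = diagonal c)
    (hS : diagonal a * diagonal s * B.map (starRingEnd ℂ) = diagonal s) :
    (∀ i, a i = 1 ∨ a i = -1) ∧ B = diagonal a := by
  have haB : diagonal a * B = 1 := by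
    have hc_unit : IsUnit (diagonal c) :=
      isUnit_diagonal.mpr (Pi.isUnit_iff.mpr fun i => (hc i).isUnit)
    refine hc_unit.mul_left_cancel ?_
    rw [← Matrix.mul_assoc, ← (commute_diagonal a c).eq, hC, mul_one]
  have hB : B = diagonal (star a) := by
    calc B = star (diagonal a) * diagonal a * B := by
          rw [Unitary.star_mul_self_of_mem ha, one_mul]
      _ = diagonal (star a) := by
          rw [Matrix.mul_assoc, haB, mul_one, star_eq_conjTranspose, diagonal_conjTranspose]
  have hsq : ∀ i, a i * a i = 1 := by
    intro i
    have hSi := congrFun (congrFun hS i) i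
    simp only [diagonal_mul_diagonal, hB, map_zero, diagonal_map, Pi.star_apply, RCLike.star_def,
      RingHomCompTriple.comp_apply, RingHom.id_apply, mul_diagonal, diagonal_apply_eq] at hSi
    exact mul_right_cancel₀ (hs i) (by linear_combination hSi)
  have hsign : ∀ i, a i = 1 ∨ a i = -1 := fun i => mul_self_eq_one_iff.mp (hsq i)
  refine ⟨hsign, hB.trans (congrArg diagonal (funext fun i => ?_))⟩
  rcases hsign i with h | h <;> simp [h]

end Diagonal

theorem strictMonoOn_sin_sq : StrictMonoOn (fun x => sin x ^ 2) (Set.Icc 0 (π / 2)) := by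
  intro x hx x' hx' hxx'
  have hpi := pi_pos
  have hsin := strictMonoOn_sin ⟨by linarith [hx.1], hx.2⟩ ⟨by linarith [hx'.1], hx'.2⟩ hxx'
  exact pow_lt_pow_left₀ hsin (sin_nonneg_of_nonneg_of_le_pi hx.1 (by linarith [hx.2]))
    two_ne_zero

theorem strictMono_sin_sq_comp {ι : Type*} [Preorder ι] {x : ι → ℝ}
    (hx : ∀ i, x i ∈ Set.Icc 0 (π / 2)) (hmono : StrictMono x) :
    StrictMono fun i => sin (x i) ^ 2 :=
  fun _ _ hij => strictMonoOn_sin_sq (hx _) (hx _) (hmono hij)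

end SpKAK

open SpKAK

/-- **Uniqueness of the `KAK` decomposition of `Sp(N)` up to the centralizer, on the
interior of `𝒜`**: if `0 < y_1 < ⋯ < y_N < π/2`, `0 < y'_1 < ⋯ < y'_N < π/2` and
`k(U)·exp(H(y))·k(V) = k(U')·exp(H(y'))·k(V')`, then `y = y'` and there are signs
`ε_i ∈ {−1,1}` with `U' = U·diag(ε)` and `V' = diag(ε)·V`. -/
theorem Sp_KAK_unique (N : ℕ) (U U' V V' : Matrix (Fin N) (Fin N) ℂ)
    (hU : U ∈ Matrix.unitaryGroup (Fin N) ℂ) (hU' : U' ∈ Matrix.unitaryGroup (Fin N) ℂ)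
    (hV : V ∈ Matrix.unitaryGroup (Fin N) ℂ) (hV' : V' ∈ Matrix.unitaryGroup (Fin N) ℂ)
    (y y' : Fin N → ℝ)
    (hy : (∀ i, 0 < y i ∧ y i < π / 2) ∧ StrictMono y)
    (hy' : (∀ i, 0 < y' i ∧ y' i < π / 2) ∧ StrictMono y')
    (heq : kEmb N U * NormedSpace.exp (Hmat N y) * kEmb N V =
      kEmb N U' * NormedSpace.exp (Hmat N y') * kEmb N V') :
    y = y' ∧ ∃ ε : Fin N → ℂ, (∀ i, ε i = 1 ∨ ε i = -1) ∧
      U' = U * Matrix.diagonal ε ∧ V' = Matrix.diagonal ε * V := by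
  obtain ⟨hy_mem, hy_mono⟩ := hy
  obtain ⟨hy'_mem, hy'_mono⟩ := hy'
  have hpi := pi_pos
  have hIcc : ∀ {x : Fin N → ℝ}, (∀ i, 0 < x i ∧ x i < π / 2) →
      ∀ i, x i ∈ Set.Icc 0 (π / 2) :=
    fun hx i => Set.Ioo_subset_Icc_self (hx i)
  obtain ⟨hC, hS⟩ := upper_blocks_eq_of_kEmb_mul_exp_Hmat_mul_kEmb_eq hU' hV' heq
  generalize hA_def : star U' * U = A at hC hS
  generalize hB_def : V * star V' = B at hC hS
  have hA : A ∈ unitaryGroup (Fin N) ℂ := hA_def ▸ mul_mem (Unitary.star_mem hU') hU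
  have hB : B ∈ unitaryGroup (Fin N) ℂ := hB_def ▸ mul_mem hV (Unitary.star_mem hV')
  have hintertwine :=
    mul_mul_star_self_eq_mul_star_self_mul hA (map_star_mem_unitaryGroup_iff.mpr hB) hS
  rw [diagonal_ofReal_mul_star_self, diagonal_ofReal_mul_star_self] at hintertwine
  obtain ⟨hsin_sq, hA_diag⟩ := eq_and_isDiag_of_mul_diagonal_eq_diagonal_mul
    (Unitary.isUnit_coe (U := ⟨A, hA⟩)) (strictMono_sin_sq_comp (hIcc hy_mem) hy_mono)
    (strictMono_sin_sq_comp (hIcc hy'_mem) hy'_mono) hintertwine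
  obtain rfl : y = y' := funext fun i =>
    strictMonoOn_sin_sq.injOn (hIcc hy_mem i) (hIcc hy'_mem i) (congrFun hsin_sq i)
  obtain ⟨ε, rfl⟩ : ∃ ε, A = diagonal ε := ⟨_, hA_diag.diagonal_diag.symm⟩
  obtain ⟨hsign, rfl⟩ := signs_and_eq_diagonal_of_diagonal_mul_mul_eq hA
    (fun i => Complex.ofReal_ne_zero.mpr
      (cos_pos_of_mem_Ioo ⟨by linarith [(hy_mem i).1], (hy_mem i).2⟩).ne')
    (fun i => Complex.ofReal_ne_zero.mpr
      (sin_pos_of_pos_of_lt_pi (hy_mem i).1 (by linarith [(hy_mem i).2])).ne') hC hS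
  have hεε : diagonal ε * diagonal ε = 1 := by
    rw [diagonal_mul_diagonal, ← diagonal_one]
    exact congrArg diagonal (funext fun i => mul_self_eq_one_iff.mpr (hsign i))
  exact ⟨rfl, ε, hsign, eq_mul_of_star_mul_eq hU' hA_def hεε,
    eq_mul_of_mul_star_eq hV' hB_def hεε⟩
end
end
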